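/- arXiv:2505.06187 — 3 statements merged into one kernel-verified Lean document; each statement's English description precedes it below -/
import Mathlib

section
/- Suppose that parts (1)–(3) of Assumption GEN hold and that there exists λ > 0 with μ̂(λ) < ∞. Then almost surely, for every t ≥ 0 the set BP(t) = {u ∈ U_∞ : B(u) ≤ t} is finite. -/
open MeasureTheory ProbabilityTheory ENNReal NNReal Filter Set

namespace CMJ

/-- Individuals (labels) of the Ulam–Harris tree `U_∞`, encoded as finite lists of
child indices.  The list entry `j : ℕ` encodes the `(j+1)`-st child, so `v ++ [j]`
is the individual "`v (j+1)`" of the paper, and the root `∅` is `[]`. -/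
abbrev Lab : Type := List ℕ

variable {Ω : Type*} [MeasurableSpace Ω]

/-- `expNeg l s = e^{-l·s}` for `s ∈ [0,∞]`. -/
noncomputable def expNeg (l : ℝ) (s : ℝ≥0∞) : ℝ≥0∞ :=
  if s = ⊤ then 0 else ENNReal.ofReal (Real.exp (-l * s.toReal))

/-- Auxiliary birth-time recursion, on reversed labels. -/
noncomputable def birthAux (D : Lab → Ω → ℕ∞) (X : Lab → ℕ → Ω → ℝ≥0∞) :
    Lab → Ω → ℝ≥0∞
  | [] => fun _ => 0
  | j :: rv => fun ω =>
      birthAux D X rv ω +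
        if ((j : ℕ∞) + 1 ≤ D rv.reverse ω)
          then ∑ i ∈ Finset.range (j + 1), X rv.reverse i ω
          else ⊤

/-- `birth D X v ω` is the birth time `B(v)` of the individual `v`:
`B(∅) = 0`, and the `(j+1)`-st child of `v` is born at
`B(v) + Σ_{i=1}^{j+1} X(v,i)` if `j+1 ≤ D^{(v)}`, and never (`∞`) otherwise. -/
noncomputable def birth (D : Lab → Ω → ℕ∞) (X : Lab → ℕ → Ω → ℝ≥0∞)
    (v : Lab) (ω : Ω) : ℝ≥0∞ := birthAux D X v.reverse ω

/-- The lifetime `L^{(v)} = Σ_{i=1}^{D^{(v)}+1} X(v,i)` of the individual `v`. -/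
noncomputable def lifetime (D : Lab → Ω → ℕ∞) (X : Lab → ℕ → Ω → ℝ≥0∞)
    (v : Lab) (ω : Ω) : ℝ≥0∞ :=
  ∑' i : ℕ, if (i : ℕ∞) ≤ D v ω then X v i ω else 0

/-- The set `A_t` of individuals alive at time `t`. -/
def aliveAt (D : Lab → Ω → ℕ∞) (X : Lab → ℕ → Ω → ℝ≥0∞)
    (t : ℝ≥0∞) (ω : Ω) : Set Lab :=
  {v | birth D X v ω ≤ t ∧ t < birth D X v ω + lifetime D X v ω}

/-- The survival event `S = ⋂_{t ≥ 0} {A_t ≠ ∅}`. -/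
def survival (D : Lab → Ω → ℕ∞) (X : Lab → ℕ → Ω → ℝ≥0∞) : Set Ω :=
  {ω | ∀ t : ℝ≥0, (aliveAt D X (t : ℝ≥0∞) ω).Nonempty}

/-- `deg D X v t ω` is the number of children `v` has produced by time `t`
(with value `⊥ = -∞` if `v` is not born by time `t`). -/
noncomputable def deg (D : Lab → Ω → ℕ∞) (X : Lab → ℕ → Ω → ℝ≥0∞)
    (v : Lab) (t : ℝ≥0∞) (ω : Ω) : WithBot ℕ∞ :=
  if birth D X v ω ≤ t then
    ((min (⨆ (k : ℕ) (_ : ∑ i ∈ Finset.range k, X v i ω ≤ t - birth D X v ω), (k : ℕ∞))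
        (D v ω) : ℕ∞) : WithBot ℕ∞)
  else ⊥

/-- A canonical realizer of the minimal birth time among the maximal-degree members
of a set `s` of individuals at time `t`. -/
noncomputable def hubChoice (D : Lab → Ω → ℕ∞) (X : Lab → ℕ → Ω → ℝ≥0∞)
    (s : Set Lab) (t : ℝ≥0∞) (ω : Ω) : Lab :=
  Classical.epsilon fun v =>
    v ∈ s ∧ (∀ u ∈ s, deg D X u t ω ≤ deg D X v t ω) ∧
      ∀ u ∈ s, (∀ w ∈ s, deg D X w t ω ≤ deg D X u t ω) → birth D X v ω ≤ birth D X u ω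

/-- The individuals alive at time `t` that remain after removing the individuals
realizing `I_t^{(1)}, …, I_t^{(m)}`. -/
noncomputable def remaining (D : Lab → Ω → ℕ∞) (X : Lab → ℕ → Ω → ℝ≥0∞) :
    ℕ → ℝ≥0∞ → Ω → Set Lab
  | 0, t, ω => aliveAt D X t ω
  | m + 1, t, ω => remaining D X m t ω \ {hubChoice D X (remaining D X m t ω) t ω}

/-- `Ihub D X m t ω = I_t^{(m)}`, the birth time of the oldest alive individual with
the `m`-th largest number of children at time `t`. -/
noncomputable def Ihub (D : Lab → Ω → ℕ∞) (X : Lab → ℕ → Ω → ℝ≥0∞)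
    (m : ℕ) (t : ℝ≥0∞) (ω : Ω) : ℝ≥0∞ :=
  sInf {x | ∃ v ∈ remaining D X (m - 1) t ω,
      (∀ u ∈ remaining D X (m - 1) t ω, deg D X u t ω ≤ deg D X v t ω) ∧
        x = birth D X v ω}

/-- The index type for the full family of offspring and inter-birth time variables. -/
def famType : Lab ⊕ (Lab × ℕ) → Type
  | .inl _ => ℕ∞
  | .inr _ => ℝ≥0∞

/-- The measurable structure on the codomains of the full family. -/
noncomputable def famMS : ∀ p, MeasurableSpace (famType p)
  | .inl _ => inferInstanceAs (MeasurableSpace ℕ∞)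
  | .inr _ => inferInstanceAs (MeasurableSpace ℝ≥0∞)

/-- The full family of random variables `{D^{(v)}}_v ∪ {X(v,i)}_{v,i}`. -/
def fam (D : Lab → Ω → ℕ∞) (X : Lab → ℕ → Ω → ℝ≥0∞) :
    ∀ p : Lab ⊕ (Lab × ℕ), Ω → famType p
  | .inl v => D v
  | .inr vi => X vi.1 vi.2

/-- The Laplace transform `μ̂(λ) = E[Σ_{j=1}^{D} exp(-λ Σ_{i=1}^{j} X(i))]`, computed from
the root variables. -/
noncomputable def muhat (P : Measure Ω) (D : Lab → Ω → ℕ∞) (X : Lab → ℕ → Ω → ℝ≥0∞)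
    (l : ℝ) : ℝ≥0∞ :=
  ∫⁻ ω, ∑' j : ℕ,
    (if (j : ℕ∞) + 1 ≤ D [] ω then expNeg l (∑ i ∈ Finset.range (j + 1), X [] i ω) else 0) ∂P

/-- `E[e^{λ (X(i)' - X(i))}]`, where `(X(i)')_i = (X([1],i))_i` is an independent copy of
`(X(i))_i = (X(∅,i))_i`.  Here `i : ℕ` encodes the paper's index `i+1`. -/
noncomputable def mgfDiff (P : Measure Ω) (X : Lab → ℕ → Ω → ℝ≥0∞) (l : ℝ) (i : ℕ) : ℝ≥0∞ :=
  ∫⁻ ω, ENNReal.ofReal (Real.exp (l * ((X [0] i ω).toReal - (X [] i ω).toReal))) ∂P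

/-- Condition (PHC): there are `λ > 0` and `K ∈ ℕ` with `μ̂(λ) < 1` and
`Π_{i=K+1}^∞ E[e^{λ(X(i)'-X(i))}] < ∞` (the factors are ≥ 1, so the infinite product
is the supremum of the partial products). -/
def PHC (P : Measure Ω) (D : Lab → Ω → ℕ∞) (X : Lab → ℕ → Ω → ℝ≥0∞) : Prop :=
  ∃ l : ℝ, 0 < l ∧ ∃ K : ℕ,
    muhat P D X l < 1 ∧ (⨆ n : ℕ, ∏ i ∈ Finset.Ico K n, mgfDiff P X l i) < ⊤

/-- Assumption GEN, phrased for the root variables `D = D^{(∅)}`, `X(i) = X(∅,i)`.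
Part (1), the mutual independence of `D` and the `X(i)`, is contained in the
mutual independence of the whole family, hypothesised separately. -/
def GEN (P : Measure Ω) (D : Lab → Ω → ℕ∞) (X : Lab → ℕ → Ω → ℝ≥0∞) : Prop :=
  (∀ i, ∀ᵐ ω ∂P, X [] i ω ≠ ⊤) ∧
    (∑' k : ℕ, P {ω | (k : ℕ∞) + 1 ≤ D [] ω} *
        ∏ i ∈ Finset.range (k + 1), P {ω | X [] i ω = 0}) < 1 ∧
      0 < P {ω | D [] ω = ⊤}


section Aux

/-! ### Basic lemmas about `expNeg` -/

lemma expNeg_top (lam : ℝ) : expNeg lam ⊤ = 0 := by simp [expNeg]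

lemma expNeg_zero (lam : ℝ) : expNeg lam 0 = 1 := by simp [expNeg]

lemma expNeg_ne_zero_of_ne_top (lam : ℝ) {s : ℝ≥0∞} (hs : s ≠ ⊤) : expNeg lam s ≠ 0 := by
  simp only [expNeg, if_neg hs]
  exact (ENNReal.ofReal_pos.2 (Real.exp_pos _)).ne'

lemma expNeg_le_one {lam : ℝ} (h : 0 ≤ lam) (s : ℝ≥0∞) : expNeg lam s ≤ 1 := by
  unfold expNeg
  split
  · exact zero_le_one
  · rw [← ENNReal.ofReal_one]
    refine ENNReal.ofReal_le_ofReal (Real.exp_le_one_iff.2 ?_)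
    rw [neg_mul]
    exact neg_nonpos.2 (mul_nonneg h ENNReal.toReal_nonneg)

lemma expNeg_add (lam : ℝ) (a b : ℝ≥0∞) :
    expNeg lam (a + b) = expNeg lam a * expNeg lam b := by
  rcases eq_or_ne a ⊤ with ha | ha
  · simp [expNeg, ha]
  rcases eq_or_ne b ⊤ with hb | hb
  · simp [expNeg, hb]
  have hab : a + b ≠ ⊤ := by simp [ha, hb]
  simp only [expNeg, if_neg ha, if_neg hb, if_neg hab]
  rw [← ENNReal.ofReal_mul (Real.exp_nonneg _), ← Real.exp_add, ENNReal.toReal_add ha hb]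
  have : -lam * (a.toReal + b.toReal) = -lam * a.toReal + -lam * b.toReal := by ring
  rw [this]

lemma expNeg_sum (lam : ℝ) {ι : Type*} (s : Finset ι) (f : ι → ℝ≥0∞) :
    expNeg lam (∑ i ∈ s, f i) = ∏ i ∈ s, expNeg lam (f i) := by
  induction s using Finset.cons_induction with
  | empty => simp [expNeg_zero]
  | cons a s ha ih => rw [Finset.sum_cons, Finset.prod_cons, expNeg_add, ih]

lemma expNeg_anti_right {lam : ℝ} (h : 0 ≤ lam) {s t : ℝ≥0∞} (hst : s ≤ t) :
    expNeg lam t ≤ expNeg lam s := by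
  rcases eq_or_ne t ⊤ with ht | ht
  · simp [expNeg, ht]
  have hs : s ≠ ⊤ := fun h' => ht (top_le_iff.1 (h' ▸ hst))
  simp only [expNeg, if_neg ht, if_neg hs]
  refine ENNReal.ofReal_le_ofReal (Real.exp_le_exp.2 ?_)
  have hm : s.toReal ≤ t.toReal := ENNReal.toReal_mono ht hst
  nlinarith

lemma expNeg_anti_left {lam lam' : ℝ} (h : lam ≤ lam') (s : ℝ≥0∞) :
    expNeg lam' s ≤ expNeg lam s := by
  rcases eq_or_ne s ⊤ with ht | ht
  · simp [expNeg, ht]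
  simp only [expNeg, if_neg ht]
  refine ENNReal.ofReal_le_ofReal (Real.exp_le_exp.2 ?_)
  have := ENNReal.toReal_nonneg (a := s)
  nlinarith

lemma measurable_expNeg (lam : ℝ) : Measurable (expNeg lam) := by
  unfold expNeg
  refine Measurable.ite (measurableSet_singleton _) measurable_const ?_
  exact ENNReal.measurable_ofReal.comp
    (Real.measurable_exp.comp (ENNReal.measurable_toReal.const_mul (-lam)))

lemma iInf_expNeg {lam0 : ℝ} (h0 : 0 < lam0) (s : ℝ≥0∞) :
    ⨅ n : ℕ, expNeg (lam0 + n) s = if s = 0 then 1 else 0 := by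
  rcases eq_or_ne s 0 with hs | hs
  · simp [hs, expNeg_zero]
  rw [if_neg hs]
  rcases eq_or_ne s ⊤ with ht | ht
  · simp [ht, expNeg_top]
  have hx : 0 < s.toReal := ENNReal.toReal_pos hs ht
  have hanti : Antitone fun n : ℕ => expNeg (lam0 + n) s := fun a b hab =>
    expNeg_anti_left (by exact_mod_cast add_le_add_right (Nat.cast_le.2 hab) lam0) s
  have htend : Tendsto (fun n : ℕ => expNeg (lam0 + n) s) atTop (nhds 0) := by
    have heq : (fun n : ℕ => expNeg (lam0 + n) s) =
        fun n : ℕ => ENNReal.ofReal (Real.exp (-lam0 * s.toReal) * Real.exp (-s.toReal) ^ n) := by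
      funext n
      simp only [expNeg, if_neg ht]
      congr 1
      rw [← Real.exp_nat_mul, ← Real.exp_add]
      congr 1
      ring
    rw [heq]
    have h1 : Tendsto (fun n : ℕ => Real.exp (-lam0 * s.toReal) * Real.exp (-s.toReal) ^ n)
        atTop (nhds 0) := by
      have := tendsto_pow_atTop_nhds_zero_of_lt_one (Real.exp_nonneg (-s.toReal))
        (Real.exp_lt_one_iff.2 (by linarith))
      simpa using (this.const_mul (Real.exp (-lam0 * s.toReal)))
    simpa [Function.comp_def] using (ENNReal.continuous_ofReal.tendsto 0).comp h1
  exact tendsto_nhds_unique (tendsto_atTop_iInf hanti) htend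

/-! ### The σ-algebra generated by a sub-family of the variables -/

/-- The label of a family index. -/
def lab : Lab ⊕ Lab × ℕ → Lab
  | .inl v => v
  | .inr vi => vi.1

variable (D : Lab → Ω → ℕ∞) (X : Lab → ℕ → Ω → ℝ≥0∞)

/-- The σ-algebra generated by the variables indexed by `E`. -/
noncomputable def famSA (E : Set (Lab ⊕ Lab × ℕ)) : MeasurableSpace Ω :=
  ⨆ p ∈ E, MeasurableSpace.comap (fam D X p) (famMS p)

variable {D X}

lemma famSA_le (hDmeas : ∀ v, Measurable (D v)) (hXmeas : ∀ v i, Measurable (X v i))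
    (E : Set (Lab ⊕ Lab × ℕ)) : famSA D X E ≤ ‹MeasurableSpace Ω› := by
  refine iSup₂_le fun p _ => ?_
  cases p with
  | inl v => exact measurable_iff_comap_le.mp (hDmeas v)
  | inr vi => exact measurable_iff_comap_le.mp (hXmeas vi.1 vi.2)

lemma famSA_mono {E F : Set (Lab ⊕ Lab × ℕ)} (h : E ⊆ F) : famSA D X E ≤ famSA D X F :=
  biSup_mono h

lemma measurable_D_famSA {E : Set (Lab ⊕ Lab × ℕ)} {v : Lab} (hv : Sum.inl v ∈ E) :
    Measurable[famSA D X E] (D v) :=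
  Measurable.of_comap_le
    (le_biSup (fun p => MeasurableSpace.comap (fam D X p) (famMS p)) hv)

lemma measurable_X_famSA {E : Set (Lab ⊕ Lab × ℕ)} {v : Lab} {i : ℕ}
    (hv : Sum.inr (v, i) ∈ E) : Measurable[famSA D X E] (X v i) :=
  Measurable.of_comap_le
    (le_biSup (fun p => MeasurableSpace.comap (fam D X p) (famMS p)) hv)

lemma lintegral_mul_famSA {P : Measure Ω}
    (hDmeas : ∀ v, Measurable (D v)) (hXmeas : ∀ v i, Measurable (X v i))
    (hindep : iIndepFun (m := famMS) (fam D X) P)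
    {E F : Set (Lab ⊕ Lab × ℕ)} (hEF : Disjoint E F) {f g : Ω → ℝ≥0∞}
    (hf : Measurable[famSA D X E] f) (hg : Measurable[famSA D X F] g) :
    ∫⁻ ω, f ω * g ω ∂P = (∫⁻ ω, f ω ∂P) * ∫⁻ ω, g ω ∂P := by
  have hle : ∀ p, MeasurableSpace.comap (fam D X p) (famMS p) ≤ ‹MeasurableSpace Ω› := by
    intro p
    cases p with
    | inl v => exact measurable_iff_comap_le.mp (hDmeas v)
    | inr vi => exact measurable_iff_comap_le.mp (hXmeas vi.1 vi.2)
  have hiI : iIndep (fun p => MeasurableSpace.comap (fam D X p) (famMS p)) P :=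
    (iIndepFun_iff_iIndep _ _ _).1 hindep
  have h1 : Indep (famSA D X E) (famSA D X Eᶜ) P := indep_biSup_compl hle hiI E
  have h2 : Indep (famSA D X E) (famSA D X F) P :=
    indep_of_indep_of_le_right h1 (biSup_mono fun p hp => Set.disjoint_right.1 hEF hp)
  exact lintegral_mul_eq_lintegral_mul_lintegral_of_independent_measurableSpace
    (famSA_le hDmeas hXmeas E) (famSA_le hDmeas hXmeas F) h2 hf hg

end Aux
section Aux2

variable {D : Lab → Ω → ℕ∞} {X : Lab → ℕ → Ω → ℝ≥0∞} {P : Measure Ω}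

/-- The summand of `μ̂`, for a general individual `v`. -/
noncomputable def childTerm (D : Lab → Ω → ℕ∞) (X : Lab → ℕ → Ω → ℝ≥0∞)
    (lam : ℝ) (v : Lab) (j : ℕ) (ω : Ω) : ℝ≥0∞ :=
  if (j : ℕ∞) + 1 ≤ D v ω then expNeg lam (∑ i ∈ Finset.range (j + 1), X v i ω) else 0

lemma childTerm_eq (lam : ℝ) (v : Lab) (j : ℕ) (ω : Ω) :
    childTerm D X lam v j ω =
      ({ω' | (j : ℕ∞) + 1 ≤ D v ω'}.indicator (1 : Ω → ℝ≥0∞) ω) *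
        ∏ i ∈ Finset.range (j + 1), expNeg lam (X v i ω) := by
  by_cases h : (j : ℕ∞) + 1 ≤ D v ω <;>
    simp [childTerm, Set.indicator, h, expNeg_sum]

lemma measurableSet_D_le {E : Set (Lab ⊕ Lab × ℕ)} {v : Lab} (hv : Sum.inl v ∈ E) (j : ℕ) :
    MeasurableSet[famSA D X E] {ω | (j : ℕ∞) + 1 ≤ D v ω} :=
  measurable_D_famSA hv ((Set.to_countable {x : ℕ∞ | (j : ℕ∞) + 1 ≤ x}).measurableSet)

lemma measurable_childTerm_famSA {E : Set (Lab ⊕ Lab × ℕ)} {v : Lab}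
    (hD : Sum.inl v ∈ E) (hX : ∀ i, Sum.inr (v, i) ∈ E) (lam : ℝ) (j : ℕ) :
    Measurable[famSA D X E] (childTerm D X lam v j) := by
  have h : childTerm D X lam v j = fun ω =>
      ({ω' | (j : ℕ∞) + 1 ≤ D v ω'}.indicator (1 : Ω → ℝ≥0∞) ω) *
        ∏ i ∈ Finset.range (j + 1), expNeg lam (X v i ω) := funext (childTerm_eq lam v j)
  rw [h]
  have hone : Measurable[famSA D X E] (1 : Ω → ℝ≥0∞) := measurable_const
  refine Measurable.mul ?_ ?_
  · exact hone.indicator (measurableSet_D_le hD j)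
  · exact Finset.measurable_prod _ fun i _ =>
      (measurable_expNeg lam).comp (measurable_X_famSA (hX i))

lemma measurable_childTerm (hDmeas : ∀ v, Measurable (D v)) (hXmeas : ∀ v i, Measurable (X v i))
    (lam : ℝ) (v : Lab) (j : ℕ) : Measurable (childTerm D X lam v j) :=
  (measurable_childTerm_famSA (E := Set.univ) trivial (fun _ => trivial) lam j).mono
    (famSA_le hDmeas hXmeas _) le_rfl

lemma lintegral_indicator_mul_prod
    (hDmeas : ∀ v, Measurable (D v)) (hXmeas : ∀ v i, Measurable (X v i))
    (hindep : iIndepFun (m := famMS) (fam D X) P) (lam : ℝ) (v : Lab) (j : ℕ) : ∀ k : ℕ,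
    ∫⁻ ω, ({ω' | (j : ℕ∞) + 1 ≤ D v ω'}.indicator (1 : Ω → ℝ≥0∞) ω) *
        ∏ i ∈ Finset.range k, expNeg lam (X v i ω) ∂P =
      P {ω | (j : ℕ∞) + 1 ≤ D v ω} *
        ∏ i ∈ Finset.range k, ∫⁻ ω, expNeg lam (X v i ω) ∂P := by
  have hset : MeasurableSet {ω | (j : ℕ∞) + 1 ≤ D v ω} :=
    (hDmeas v) ((Set.to_countable {x : ℕ∞ | (j : ℕ∞) + 1 ≤ x}).measurableSet)
  intro k
  induction k with
  | zero =>
      simp only [Finset.range_zero, Finset.prod_empty, mul_one]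
      exact lintegral_indicator_one hset
  | succ k ih =>
      have hdisj : Disjoint {p : Lab ⊕ Lab × ℕ | lab p = v ∧ p ≠ Sum.inr (v, k)}
          {(Sum.inr (v, k) : Lab ⊕ Lab × ℕ)} := by
        rw [Set.disjoint_right]
        rintro p hp
        rw [Set.mem_singleton_iff] at hp
        subst hp
        rintro ⟨-, h⟩
        exact h rfl
      have hf : Measurable[famSA D X {p : Lab ⊕ Lab × ℕ | lab p = v ∧ p ≠ Sum.inr (v, k)}]
          (fun ω => ({ω' | (j : ℕ∞) + 1 ≤ D v ω'}.indicator (1 : Ω → ℝ≥0∞) ω) *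
            ∏ i ∈ Finset.range k, expNeg lam (X v i ω)) := by
        have hone : Measurable[famSA D X {p : Lab ⊕ Lab × ℕ | lab p = v ∧ p ≠ Sum.inr (v, k)}]
            (1 : Ω → ℝ≥0∞) := measurable_const
        have hmemD : (Sum.inl v : Lab ⊕ Lab × ℕ) ∈
            {p : Lab ⊕ Lab × ℕ | lab p = v ∧ p ≠ Sum.inr (v, k)} := ⟨rfl, by simp⟩
        refine Measurable.mul ?_ ?_
        · exact hone.indicator (measurableSet_D_le hmemD j)
        · refine Finset.measurable_prod _ fun i hi => ?_
          have hmemX : (Sum.inr (v, i) : Lab ⊕ Lab × ℕ) ∈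
              {p : Lab ⊕ Lab × ℕ | lab p = v ∧ p ≠ Sum.inr (v, k)} := by
            refine ⟨rfl, ?_⟩
            simp only [ne_eq, Sum.inr.injEq, Prod.mk.injEq, true_and]
            intro h
            subst h
            simp at hi
          exact (measurable_expNeg lam).comp (measurable_X_famSA hmemX)
      have hg : Measurable[famSA D X {(Sum.inr (v, k) : Lab ⊕ Lab × ℕ)}]
          (fun ω => expNeg lam (X v k ω)) := by
        have hmem : (Sum.inr (v, k) : Lab ⊕ Lab × ℕ) ∈
            ({Sum.inr (v, k)} : Set (Lab ⊕ Lab × ℕ)) := rfl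
        exact (measurable_expNeg lam).comp (measurable_X_famSA hmem)
      simp_rw [Finset.prod_range_succ, ← mul_assoc]
      rw [lintegral_mul_famSA hDmeas hXmeas hindep hdisj hf hg, ih, mul_assoc]

/-- The value `m(λ)` of the Laplace transform in factorized form. -/
noncomputable def mSum (P : Measure Ω) (D : Lab → Ω → ℕ∞) (X : Lab → ℕ → Ω → ℝ≥0∞)
    (lam : ℝ) : ℝ≥0∞ :=
  ∑' j : ℕ, P {ω | (j : ℕ∞) + 1 ≤ D [] ω} *
    ∏ i ∈ Finset.range (j + 1), ∫⁻ ω, expNeg lam (X [] i ω) ∂P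

lemma lintegral_childTerm
    (hDmeas : ∀ v, Measurable (D v)) (hXmeas : ∀ v i, Measurable (X v i))
    (hindep : iIndepFun (m := famMS) (fam D X) P)
    (hDid : ∀ v : Lab, P.map (D v) = P.map (D []))
    (hXid : ∀ (v : Lab) (i : ℕ), P.map (X v i) = P.map (X [] i))
    (lam : ℝ) (v : Lab) (j : ℕ) :
    ∫⁻ ω, childTerm D X lam v j ω ∂P =
      P {ω | (j : ℕ∞) + 1 ≤ D [] ω} *
        ∏ i ∈ Finset.range (j + 1), ∫⁻ ω, expNeg lam (X [] i ω) ∂P := by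
  have hms : MeasurableSet {x : ℕ∞ | (j : ℕ∞) + 1 ≤ x} :=
    (Set.to_countable _).measurableSet
  simp_rw [childTerm_eq lam v j]
  rw [lintegral_indicator_mul_prod hDmeas hXmeas hindep lam v j (j + 1)]
  congr 1
  · have h : ∀ u : Lab, P {ω | (j : ℕ∞) + 1 ≤ D u ω} =
        P.map (D u) {x : ℕ∞ | (j : ℕ∞) + 1 ≤ x} := fun u =>
      (Measure.map_apply (hDmeas u) hms).symm
    rw [h v, h ([] : Lab), hDid v]
  · refine Finset.prod_congr rfl fun i _ => ?_
    have h : ∀ u : Lab, ∫⁻ ω, expNeg lam (X u i ω) ∂P =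
        ∫⁻ x, expNeg lam x ∂(P.map (X u i)) := fun u =>
      (lintegral_map (measurable_expNeg lam) (hXmeas u i)).symm
    rw [h v, h ([] : Lab), hXid v i]

lemma muhat_eq_mSum
    (hDmeas : ∀ v, Measurable (D v)) (hXmeas : ∀ v i, Measurable (X v i))
    (hindep : iIndepFun (m := famMS) (fam D X) P)
    (hDid : ∀ v : Lab, P.map (D v) = P.map (D []))
    (hXid : ∀ (v : Lab) (i : ℕ), P.map (X v i) = P.map (X [] i))
    (lam : ℝ) : muhat P D X lam = mSum P D X lam := by
  unfold muhat mSum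
  have hch : ∫⁻ ω, ∑' j : ℕ,
      (if (j : ℕ∞) + 1 ≤ D [] ω then expNeg lam (∑ i ∈ Finset.range (j + 1), X [] i ω) else 0) ∂P
      = ∫⁻ ω, ∑' j : ℕ, childTerm D X lam ([] : Lab) j ω ∂P := rfl
  rw [hch, lintegral_tsum fun j => (measurable_childTerm hDmeas hXmeas lam ([] : Lab) j).aemeasurable]
  exact tsum_congr fun j => lintegral_childTerm hDmeas hXmeas hindep hDid hXid lam ([] : Lab) j

/-! ### Measurability of the birth times -/

/-- The indices of the variables a reversed birth time depends on. -/
def deps (rv : Lab) : Set (Lab ⊕ Lab × ℕ) :=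
  {p | (lab p).reverse <:+ rv ∧ (lab p).reverse ≠ rv}

lemma deps_subset_cons (j : ℕ) (rv : Lab) : deps rv ⊆ deps (j :: rv) := by
  rintro p ⟨h1, h2⟩
  refine ⟨h1.trans (List.suffix_cons j rv), fun heq => ?_⟩
  have := h1.length_le
  rw [heq] at this
  simp at this

lemma measurable_birthAux_famSA (rv : Lab) :
    Measurable[famSA D X (deps rv)] (birthAux D X rv) := by
  induction rv with
  | nil => exact measurable_const
  | cons j rv ih =>
      have hmem : ∀ q : Lab ⊕ Lab × ℕ, lab q = rv.reverse → q ∈ deps (j :: rv) := by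
        intro q hq
        refine ⟨?_, ?_⟩
        · rw [hq, List.reverse_reverse]
          exact List.suffix_cons j rv
        · rw [hq, List.reverse_reverse]
          intro h
          exact (List.cons_ne_self j rv) h.symm
      have h1 : Measurable[famSA D X (deps (j :: rv))] (birthAux D X rv) :=
        ih.mono (famSA_mono (deps_subset_cons j rv)) le_rfl
      have hD : Measurable[famSA D X (deps (j :: rv))] (D rv.reverse) :=
        measurable_D_famSA (hmem _ rfl)
      have hset : MeasurableSet[famSA D X (deps (j :: rv))]
          {ω | ((j : ℕ∞)) + 1 ≤ D rv.reverse ω} :=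
        hD ((Set.to_countable {x : ℕ∞ | (j : ℕ∞) + 1 ≤ x}).measurableSet)
      have hX : Measurable[famSA D X (deps (j :: rv))]
          (fun ω => ∑ i ∈ Finset.range (j + 1), X rv.reverse i ω) :=
        Finset.measurable_sum _ fun i _ => measurable_X_famSA (hmem _ rfl)
      exact h1.add (Measurable.ite hset hX measurable_const)

lemma measurable_birthAux (hDmeas : ∀ v, Measurable (D v))
    (hXmeas : ∀ v i, Measurable (X v i)) (rv : Lab) : Measurable (birthAux D X rv) :=
  (measurable_birthAux_famSA rv).mono (famSA_le hDmeas hXmeas _) le_rfl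

lemma measurable_birth (hDmeas : ∀ v, Measurable (D v))
    (hXmeas : ∀ v i, Measurable (X v i)) (v : Lab) : Measurable (birth D X v) :=
  measurable_birthAux hDmeas hXmeas v.reverse

/-- Lists of length `n+1` are a number together with a list of length `n`. -/
def consEquiv (n : ℕ) : ℕ × {l : Lab // l.length = n} ≃ {l : Lab // l.length = n + 1} where
  toFun p := ⟨p.1 :: p.2.1, by simp [p.2.2]⟩
  invFun w :=
    match w with
    | ⟨[], h⟩ => absurd h (by simp)
    | ⟨j :: l, h⟩ => (j, ⟨l, by simpa using h⟩)
  left_inv p := by rcases p with ⟨j, ⟨l, hl⟩⟩; rfl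
  right_inv w := by
    rcases w with ⟨l, hl⟩
    cases l with
    | nil => simp at hl
    | cons j l => rfl

end Aux2

section Aux3

variable {D : Lab → Ω → ℕ∞} {X : Lab → ℕ → Ω → ℝ≥0∞} {P : Measure Ω}

lemma iInf_finset_prod (s : Finset ℕ) (I : ℕ → ℕ → ℝ≥0∞) (hanti : ∀ i, Antitone (I i))
    (hle : ∀ i n, I i n ≤ 1) : ⨅ n, ∏ i ∈ s, I i n = ∏ i ∈ s, ⨅ n, I i n := by
  have hinf_le : ∀ i, (⨅ n, I i n) ≤ 1 := fun i => (iInf_le _ 0).trans (hle i 0)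
  have htend : Tendsto (fun n => ∏ i ∈ s, I i n) atTop (nhds (∏ i ∈ s, ⨅ n, I i n)) := by
    induction s using Finset.cons_induction with
    | empty => simpa using (tendsto_const_nhds : Tendsto (fun _ : ℕ => (1 : ℝ≥0∞)) atTop _)
    | cons b s hb ih =>
        simp_rw [Finset.prod_cons]
        refine ENNReal.Tendsto.mul (tendsto_atTop_iInf (hanti b)) (Or.inr ?_) ih (Or.inr ?_)
        · exact ((Finset.prod_le_one (fun i _ => zero_le) fun i _ => hinf_le i).trans_lt
            ENNReal.one_lt_top).ne
        · exact ((hinf_le b).trans_lt ENNReal.one_lt_top).ne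
  have hanti2 : Antitone fun n => ∏ i ∈ s, I i n := fun p q h =>
    Finset.prod_le_prod' fun i _ => hanti i h
  exact tendsto_nhds_unique (tendsto_atTop_iInf hanti2) htend

lemma iInf_tsum_swap (a : ℕ → ℕ → ℝ≥0∞) (hanti : ∀ j, Antitone (a j))
    (hfin : ∑' j, a j 0 ≠ ⊤) : ⨅ n, ∑' j, a j n = ∑' j, ⨅ n, a j n := by
  have hmeasc : ∀ n, Measurable fun j => a j n := fun n => measurable_of_countable _
  have hantia : Antitone fun n => fun j => a j n := fun p q hpq j => hanti j hpq
  have h0fin : ∫⁻ j, a j 0 ∂(Measure.count) ≠ ⊤ := by rwa [lintegral_count]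
  calc ⨅ n, ∑' j, a j n = ⨅ n, ∫⁻ j, a j n ∂Measure.count := by simp [lintegral_count]
    _ = ∫⁻ j, ⨅ n, a j n ∂Measure.count := (lintegral_iInf hmeasc hantia h0fin).symm
    _ = ∑' j, ⨅ n, a j n := lintegral_count _

lemma exists_mSum_lt_one [IsProbabilityMeasure P]
    (hDmeas : ∀ v, Measurable (D v)) (hXmeas : ∀ v i, Measurable (X v i))
    (hindep : iIndepFun (m := famMS) (fam D X) P)
    (hDid : ∀ v : Lab, P.map (D v) = P.map (D []))
    (hXid : ∀ (v : Lab) (i : ℕ), P.map (X v i) = P.map (X [] i))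
    (hinst : (∑' k : ℕ, P {ω | (k : ℕ∞) + 1 ≤ D [] ω} *
        ∏ i ∈ Finset.range (k + 1), P {ω | X [] i ω = 0}) < 1)
    (hmu : ∃ l : ℝ, 0 < l ∧ muhat P D X l < ⊤) :
    ∃ lam : ℝ, 0 < lam ∧ mSum P D X lam < 1 := by
  obtain ⟨l0, hl0, hfin⟩ := hmu
  rw [muhat_eq_mSum hDmeas hXmeas hindep hDid hXid] at hfin
  have hcast : ∀ {p q : ℕ}, p ≤ q → l0 + (p : ℝ) ≤ l0 + (q : ℝ) := fun hpq =>
    add_le_add_right (Nat.cast_le.2 hpq) l0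
  set I : ℕ → ℕ → ℝ≥0∞ := fun i n => ∫⁻ ω, expNeg (l0 + n) (X ([] : Lab) i ω) ∂P with hI
  have hIanti : ∀ i, Antitone (I i) := fun i p q hpq =>
    lintegral_mono fun ω => expNeg_anti_left (hcast hpq) _
  have hIle : ∀ i n, I i n ≤ 1 := fun i n => by
    calc I i n ≤ ∫⁻ _, 1 ∂P := lintegral_mono fun ω => expNeg_le_one (by positivity) _
    _ = 1 := by simp [lintegral_one]
  have hIinf : ∀ i, (⨅ n, I i n) = P {ω | X ([] : Lab) i ω = 0} := by
    intro i
    have hset : MeasurableSet {ω | X ([] : Lab) i ω = 0} :=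
      hXmeas ([] : Lab) i (measurableSet_singleton 0)
    show (⨅ n : ℕ, ∫⁻ ω, expNeg (l0 + (n : ℕ)) (X ([] : Lab) i ω) ∂P)
      = P {ω | X ([] : Lab) i ω = 0}
    have hone : (∫⁻ ω, expNeg (l0 + ((0 : ℕ) : ℝ)) (X ([] : Lab) i ω) ∂P) ≤ 1 := by
      calc (∫⁻ ω, expNeg (l0 + ((0 : ℕ) : ℝ)) (X ([] : Lab) i ω) ∂P)
          ≤ ∫⁻ _, 1 ∂P := lintegral_mono fun ω => expNeg_le_one (by positivity) _
        _ = 1 := by simp [lintegral_one]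
    rw [← lintegral_iInf (f := fun (n : ℕ) ω => expNeg (l0 + (n : ℕ)) (X ([] : Lab) i ω))
      (fun n => (measurable_expNeg _).comp (hXmeas ([] : Lab) i))
      (fun p q hpq ω => expNeg_anti_left (hcast hpq) _)
      (hone.trans_lt ENNReal.one_lt_top).ne]
    simp_rw [iInf_expNeg hl0]
    rw [← lintegral_indicator_one hset]
    exact lintegral_congr fun ω => by by_cases h : X ([] : Lab) i ω = 0 <;>
      simp [Set.indicator, h]
  set a : ℕ → ℕ → ℝ≥0∞ := fun j n =>
    P {ω | (j : ℕ∞) + 1 ≤ D ([] : Lab) ω} * ∏ i ∈ Finset.range (j + 1), I i n with ha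
  have hmSum : ∀ n : ℕ, mSum P D X (l0 + n) = ∑' j, a j n := fun n => rfl
  have haanti : ∀ j, Antitone (a j) := fun j p q hpq =>
    mul_le_mul_right (Finset.prod_le_prod' fun i _ => hIanti i hpq) _
  have hainf : ∀ j, (⨅ n, a j n) =
      P {ω | (j : ℕ∞) + 1 ≤ D ([] : Lab) ω} *
        ∏ i ∈ Finset.range (j + 1), P {ω | X ([] : Lab) i ω = 0} := by
    intro j
    rw [ha]
    rw [← ENNReal.mul_iInf (fun htop => absurd htop (measure_ne_top P _)),
      iInf_finset_prod _ I hIanti hIle]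
    exact congrArg _ (Finset.prod_congr rfl fun i _ => hIinf i)
  have hlt : (⨅ n : ℕ, mSum P D X (l0 + n)) < 1 := by
    have hfin0 : (∑' j, a j 0) ≠ ⊤ := by
      rw [← hmSum 0]
      simpa using hfin.ne
    calc (⨅ n : ℕ, mSum P D X (l0 + n)) = ⨅ n, ∑' j, a j n := by
          exact iInf_congr hmSum
      _ = ∑' j, ⨅ n, a j n := iInf_tsum_swap a haanti hfin0
      _ = ∑' j : ℕ, P {ω | (j : ℕ∞) + 1 ≤ D ([] : Lab) ω} *
            ∏ i ∈ Finset.range (j + 1), P {ω | X ([] : Lab) i ω = 0} := tsum_congr hainf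
      _ < 1 := hinst
  obtain ⟨n, hn⟩ := iInf_lt_iff.1 hlt
  exact ⟨l0 + n, by positivity, hn⟩

end Aux3

section Aux4

variable {D : Lab → Ω → ℕ∞} {X : Lab → ℕ → Ω → ℝ≥0∞} {P : Measure Ω}

lemma G_zero [IsProbabilityMeasure P] (lam : ℝ) :
    (∑' w : {l : Lab // l.length = 0}, ∫⁻ ω, expNeg lam (birthAux D X w.1 ω) ∂P) = 1 := by
  have huniq : ∀ w : {l : Lab // l.length = 0}, w = ⟨[], rfl⟩ := by
    rintro ⟨l, hl⟩
    obtain rfl := List.length_eq_zero_iff.mp hl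
    rfl
  rw [tsum_eq_single (⟨[], rfl⟩ : {l : Lab // l.length = 0}) (fun b hb => absurd (huniq b) hb)]
  show ∫⁻ _, expNeg lam 0 ∂P = 1
  simp [expNeg_zero]

lemma lintegral_expNeg_birthAux_cons
    (hDmeas : ∀ v, Measurable (D v)) (hXmeas : ∀ v i, Measurable (X v i))
    (hindep : iIndepFun (m := famMS) (fam D X) P)
    (hDid : ∀ v : Lab, P.map (D v) = P.map (D []))
    (hXid : ∀ (v : Lab) (i : ℕ), P.map (X v i) = P.map (X [] i))
    (lam : ℝ) (j : ℕ) (rv : Lab) :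
    ∫⁻ ω, expNeg lam (birthAux D X (j :: rv) ω) ∂P =
      (∫⁻ ω, expNeg lam (birthAux D X rv ω) ∂P) *
        (P {ω | (j : ℕ∞) + 1 ≤ D ([] : Lab) ω} *
          ∏ i ∈ Finset.range (j + 1), ∫⁻ ω, expNeg lam (X ([] : Lab) i ω) ∂P) := by
  have hstep : ∀ ω, expNeg lam (birthAux D X (j :: rv) ω) =
      expNeg lam (birthAux D X rv ω) * childTerm D X lam rv.reverse j ω := by
    intro ω
    rw [show birthAux D X (j :: rv) ω = birthAux D X rv ω +
        (if ((j : ℕ∞) + 1 ≤ D rv.reverse ω)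
          then ∑ i ∈ Finset.range (j + 1), X rv.reverse i ω else ⊤) from by rw [birthAux],
      expNeg_add]
    congr 1
    by_cases h : (j : ℕ∞) + 1 ≤ D rv.reverse ω
    · simp [childTerm, h]
    · simp [childTerm, h, expNeg_top]
  simp_rw [hstep]
  have hdisj : Disjoint (deps rv) {p : Lab ⊕ Lab × ℕ | lab p = rv.reverse} := by
    rw [Set.disjoint_left]
    rintro p ⟨h1, h2⟩ h3
    rw [Set.mem_setOf_eq] at h3
    rw [h3, List.reverse_reverse] at h2
    exact h2 rfl
  have hf : Measurable[famSA D X (deps rv)] fun ω => expNeg lam (birthAux D X rv ω) :=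
    (measurable_expNeg lam).comp (measurable_birthAux_famSA rv)
  have hg : Measurable[famSA D X {p : Lab ⊕ Lab × ℕ | lab p = rv.reverse}]
      (childTerm D X lam rv.reverse j) :=
    measurable_childTerm_famSA (E := {p : Lab ⊕ Lab × ℕ | lab p = rv.reverse})
      (v := rv.reverse) rfl (fun i => rfl) lam j
  rw [lintegral_mul_famSA hDmeas hXmeas hindep hdisj hf hg,
    lintegral_childTerm hDmeas hXmeas hindep hDid hXid lam rv.reverse j]

lemma G_succ [IsProbabilityMeasure P]
    (hDmeas : ∀ v, Measurable (D v)) (hXmeas : ∀ v i, Measurable (X v i))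
    (hindep : iIndepFun (m := famMS) (fam D X) P)
    (hDid : ∀ v : Lab, P.map (D v) = P.map (D []))
    (hXid : ∀ (v : Lab) (i : ℕ), P.map (X v i) = P.map (X [] i))
    (lam : ℝ) (n : ℕ) :
    (∑' w : {l : Lab // l.length = n + 1}, ∫⁻ ω, expNeg lam (birthAux D X w.1 ω) ∂P) =
      mSum P D X lam *
        ∑' w : {l : Lab // l.length = n}, ∫⁻ ω, expNeg lam (birthAux D X w.1 ω) ∂P := by
  rw [← (consEquiv n).tsum_eq fun w : {l : Lab // l.length = n + 1} =>
    ∫⁻ ω, expNeg lam (birthAux D X w.1 ω) ∂P]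
  calc (∑' p : ℕ × {l : Lab // l.length = n},
        ∫⁻ ω, expNeg lam (birthAux D X ((consEquiv n) p).1 ω) ∂P)
      = ∑' p : ℕ × {l : Lab // l.length = n},
          ∫⁻ ω, expNeg lam (birthAux D X (p.1 :: p.2.1) ω) ∂P := tsum_congr fun p => rfl
    _ = ∑' (j : ℕ) (w : {l : Lab // l.length = n}),
          ∫⁻ ω, expNeg lam (birthAux D X (j :: w.1) ω) ∂P :=
        ENNReal.tsum_prod (f := fun (j : ℕ) (w : {l : Lab // l.length = n}) =>
          ∫⁻ ω, expNeg lam (birthAux D X (j :: w.1) ω) ∂P)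
    _ = ∑' (j : ℕ) (w : {l : Lab // l.length = n}),
          (∫⁻ ω, expNeg lam (birthAux D X w.1 ω) ∂P) *
            (P {ω | (j : ℕ∞) + 1 ≤ D ([] : Lab) ω} *
              ∏ i ∈ Finset.range (j + 1), ∫⁻ ω, expNeg lam (X ([] : Lab) i ω) ∂P) :=
        tsum_congr fun j => tsum_congr fun w =>
          lintegral_expNeg_birthAux_cons hDmeas hXmeas hindep hDid hXid lam j w.1
    _ = ∑' j : ℕ,
          (∑' w : {l : Lab // l.length = n}, ∫⁻ ω, expNeg lam (birthAux D X w.1 ω) ∂P) *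
            (P {ω | (j : ℕ∞) + 1 ≤ D ([] : Lab) ω} *
              ∏ i ∈ Finset.range (j + 1), ∫⁻ ω, expNeg lam (X ([] : Lab) i ω) ∂P) :=
        tsum_congr fun j => ENNReal.tsum_mul_right
    _ = (∑' w : {l : Lab // l.length = n}, ∫⁻ ω, expNeg lam (birthAux D X w.1 ω) ∂P) *
          mSum P D X lam := ENNReal.tsum_mul_left
    _ = mSum P D X lam *
          ∑' w : {l : Lab // l.length = n}, ∫⁻ ω, expNeg lam (birthAux D X w.1 ω) ∂P :=
        mul_comm _ _

end Aux4






/-- Lemma: the branching process is finite at all times.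
If parts (1)–(3) of Assumption GEN hold and `μ̂(λ) < ∞` for some `λ > 0`, then almost
surely the set `BP(t) = {u ∈ U_∞ : B(u) ≤ t}` is finite for every `t ≥ 0`. -/
theorem bp_finite
    (P : Measure Ω) [IsProbabilityMeasure P]
    (D : Lab → Ω → ℕ∞) (X : Lab → ℕ → Ω → ℝ≥0∞)
    (hDmeas : ∀ v, Measurable (D v)) (hXmeas : ∀ v i, Measurable (X v i))
    -- the full family of offspring and inter-birth time variables is mutually independent
    -- (this contains part (1) of Assumption GEN) …
    (hindep : iIndepFun (m := famMS) (fam D X) P)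
    -- … the `D^{(v)}` are identically distributed, and so are the sequences `(X(v,i))_i` …
    (hDid : ∀ v : Lab, P.map (D v) = P.map (D []))
    (hXid : ∀ (v : Lab) (i : ℕ), P.map (X v i) = P.map (X [] i))
    -- part (2) of Assumption GEN: every `X(i)` is finite almost surely
    (hfin : ∀ i : ℕ, ∀ᵐ ω ∂P, X [] i ω ≠ ⊤)
    -- part (3) of Assumption GEN
    (hinst : (∑' k : ℕ, P {ω | (k : ℕ∞) + 1 ≤ D [] ω} *
        ∏ i ∈ Finset.range (k + 1), P {ω | X [] i ω = 0}) < 1)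
    -- `μ̂(λ) < ∞` for some `λ > 0`
    (hmu : ∃ l : ℝ, 0 < l ∧ muhat P D X l < ⊤) :
    ∀ᵐ ω ∂P, ∀ t : ℝ≥0, {u : Lab | birth D X u ω ≤ (t : ℝ≥0∞)}.Finite := by
  obtain ⟨lam, hlam, hmlt⟩ :=
    exists_mSum_lt_one hDmeas hXmeas hindep hDid hXid hinst hmu
  have hGpow : ∀ n : ℕ,
      (∑' w : {l : Lab // l.length = n}, ∫⁻ ω, expNeg lam (birthAux D X w.1 ω) ∂P) =
        (mSum P D X lam) ^ n := by
    intro n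
    induction n with
    | zero => simpa using G_zero lam
    | succ n ih =>
        rw [G_succ hDmeas hXmeas hindep hDid hXid lam n, ih, ← pow_succ']
  have htotal : ∫⁻ ω, ∑' u : Lab, expNeg lam (birth D X u ω) ∂P =
      ∑' n : ℕ, (mSum P D X lam) ^ n := by
    rw [lintegral_tsum (f := fun (u : Lab) ω => expNeg lam (birth D X u ω)) fun u =>
      ((measurable_expNeg lam).comp (measurable_birth hDmeas hXmeas u)).aemeasurable]
    have hrev : (∑' u : Lab, ∫⁻ ω, expNeg lam (birth D X u ω) ∂P) =
        ∑' rv : Lab, ∫⁻ ω, expNeg lam (birthAux D X rv ω) ∂P :=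
      Equiv.tsum_eq (Function.Involutive.toPerm _ List.reverse_involutive)
        fun rv => ∫⁻ ω, expNeg lam (birthAux D X rv ω) ∂P
    rw [hrev, ← (Equiv.sigmaFiberEquiv (fun l : Lab => l.length)).tsum_eq]
    calc (∑' c : (y : ℕ) × {x : Lab // List.length x = y},
          ∫⁻ ω, expNeg lam
            (birthAux D X ((Equiv.sigmaFiberEquiv fun l : Lab => List.length l) c) ω) ∂P)
        = ∑' c : (y : ℕ) × {x : Lab // List.length x = y},
            ∫⁻ ω, expNeg lam (birthAux D X c.2.1 ω) ∂P := tsum_congr fun c => rfl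
      _ = ∑' (n : ℕ) (w : {x : Lab // List.length x = n}),
            ∫⁻ ω, expNeg lam (birthAux D X w.1 ω) ∂P :=
          ENNReal.tsum_sigma fun n (w : {x : Lab // List.length x = n}) =>
            ∫⁻ ω, expNeg lam (birthAux D X w.1 ω) ∂P
      _ = ∑' n : ℕ, mSum P D X lam ^ n := tsum_congr hGpow
  have hZmeas : Measurable fun ω => ∑' u : Lab, expNeg lam (birth D X u ω) :=
    Measurable.ennreal_tsum fun u =>
      (measurable_expNeg lam).comp (measurable_birth hDmeas hXmeas u)
  have hZfin : ∫⁻ ω, ∑' u : Lab, expNeg lam (birth D X u ω) ∂P ≠ ⊤ := by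
    rw [htotal, ENNReal.tsum_geometric]
    exact ENNReal.inv_ne_top.2 (tsub_pos_iff_lt.2 hmlt).ne'
  filter_upwards [ae_lt_top hZmeas hZfin] with ω hω t
  by_contra hcon
  have hinf : {u : Lab | birth D X u ω ≤ (t : ℝ≥0∞)}.Infinite := hcon
  haveI : Infinite {u : Lab | birth D X u ω ≤ (t : ℝ≥0∞)} := Set.infinite_coe_iff.2 hinf
  have h1 : (∑' _ : {u : Lab | birth D X u ω ≤ (t : ℝ≥0∞)}, expNeg lam ((t : ℝ≥0∞))) ≤
      ∑' u : {u : Lab | birth D X u ω ≤ (t : ℝ≥0∞)}, expNeg lam (birth D X u.1 ω) :=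
    ENNReal.tsum_le_tsum fun u => expNeg_anti_right hlam.le u.2
  have h2 : (∑' u : {u : Lab | birth D X u ω ≤ (t : ℝ≥0∞)}, expNeg lam (birth D X u.1 ω)) ≤
      ∑' u : Lab, expNeg lam (birth D X u ω) :=
    tsum_comp_le_tsum_of_injective Subtype.val_injective _
  have h3 : (∑' _ : {u : Lab | birth D X u ω ≤ (t : ℝ≥0∞)}, expNeg lam ((t : ℝ≥0∞))) = ⊤ :=
    tsum_const_eq_top_of_ne_zero (expNeg_ne_zero_of_ne_top lam ENNReal.coe_ne_top)
  have : (⊤ : ℝ≥0∞) ≤ ∑' u : Lab, expNeg lam (birth D X u ω) := h3 ▸ (h1.trans h2)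
  exact absurd hω (by simp [top_le_iff.1 this])

end CMJ
end

section
/- For every λ ≥ 0, E[ Σ_{j=1}^{D} exp(−λ S_j) ] = Σ_{k=1}^{∞} Π_{i=0}^{k−1} b(i)/(b(i)+d(i)+λ), as an identity in [0,∞] (the sum over j ranging over all j ∈ ℕ with j ≤ D). -/
open MeasureTheory ProbabilityTheory ENNReal NNReal Filter Set

namespace PAVD

variable {Ω : Type*} [MeasurableSpace Ω]

/-- `expNeg l s = e^{-l·s}` for `s ∈ [0,∞]`. -/
noncomputable def expNeg (l : ℝ) (s : ℝ≥0∞) : ℝ≥0∞ :=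
  if s = ⊤ then 0 else ENNReal.ofReal (Real.exp (-l * s.toReal))

/-- `D = inf {i ∈ ℕ₀ : B_i = 0}` (`= ∞` if there is no such `i`). -/
noncomputable def Dvar (Bber : ℕ → Ω → Bool) (ω : Ω) : ℕ∞ :=
  ⨅ (i : ℕ) (_ : Bber i ω = false), (i : ℕ∞)

/-- `S_k = Σ_{i=0}^{k-1} E_i`. -/
noncomputable def Spart (E : ℕ → Ω → ℝ≥0∞) (k : ℕ) (ω : Ω) : ℝ≥0∞ :=
  ∑ i ∈ Finset.range k, E i ω

/-- The lifetime `L = S_{D+1} = Σ_{i=0}^{D} E_i`. -/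
noncomputable def Lvar (E : ℕ → Ω → ℝ≥0∞) (Bber : ℕ → Ω → Bool) (ω : Ω) : ℝ≥0∞ :=
  ∑' i : ℕ, if (i : ℕ∞) ≤ Dvar Bber ω then E i ω else 0

/-- Codomains of the combined family `(E_i)_i ∪ (B_i)_i`. -/
def EBtype : ℕ ⊕ ℕ → Type
  | .inl _ => ℝ≥0∞
  | .inr _ => Bool

/-- Measurable structures on the codomains of the combined family. -/
noncomputable def EBms : ∀ p, MeasurableSpace (EBtype p)
  | .inl _ => inferInstanceAs (MeasurableSpace ℝ≥0∞)
  | .inr _ => inferInstanceAs (MeasurableSpace Bool)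

/-- The combined family `(E_i)_i ∪ (B_i)_i`. -/
def EBfam (E : ℕ → Ω → ℝ≥0∞) (Bber : ℕ → Ω → Bool) : ∀ p : ℕ ⊕ ℕ, Ω → EBtype p
  | .inl i => E i
  | .inr i => Bber i

/-- The exponential/Bernoulli data of the PAVD model: `E_i` is exponential with rate
`b(i) + d(i)`, the `B_i` are Bernoulli with success probability `b(i)/(b(i)+d(i))`,
and all of them are mutually independent. -/
structure IsPAVDData (P : Measure Ω) (b d : ℕ → ℝ) (E : ℕ → Ω → ℝ≥0∞)
    (Bber : ℕ → Ω → Bool) : Prop where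
  hb : ∀ i, 0 < b i
  hd : ∀ i, 0 ≤ d i
  Emeas : ∀ i, Measurable (E i)
  Bmeas : ∀ i, Measurable (Bber i)
  indep : iIndepFun (m := EBms) (EBfam E Bber) P
  Edist : ∀ (i : ℕ) (t : ℝ), 0 ≤ t →
    P {ω | ENNReal.ofReal t < E i ω} = ENNReal.ofReal (Real.exp (-(b i + d i) * t))
  Bdist : ∀ i : ℕ, P {ω | Bber i ω = true} = ENNReal.ofReal (b i / (b i + d i))

set_option linter.unusedSectionVars false

lemma expNeg_zero (l : ℝ) : expNeg l 0 = 1 := by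
  simp [expNeg]

lemma expNeg_add (l : ℝ) (a b : ℝ≥0∞) : expNeg l (a + b) = expNeg l a * expNeg l b := by
  rcases eq_or_ne a ⊤ with ha | ha
  · simp [expNeg, ha]
  rcases eq_or_ne b ⊤ with hb | hb
  · simp [expNeg, hb]
  have hab : a + b ≠ ⊤ := by simp [ha, hb]
  simp only [expNeg, if_neg ha, if_neg hb, if_neg hab]
  rw [ENNReal.toReal_add ha hb, ← ENNReal.ofReal_mul (Real.exp_nonneg _), ← Real.exp_add]
  ring_nf

lemma expNeg_sum (l : ℝ) (s : Finset ℕ) (f : ℕ → ℝ≥0∞) :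
    expNeg l (∑ i ∈ s, f i) = ∏ i ∈ s, expNeg l (f i) := by
  classical
  induction s using Finset.cons_induction with
  | empty => simpa using expNeg_zero l
  | cons a s ha ih => rw [Finset.sum_cons, Finset.prod_cons, expNeg_add, ih]

lemma measurable_expNeg (l : ℝ) : Measurable (expNeg l) := by
  unfold expNeg
  apply Measurable.ite (measurableSet_singleton ⊤)
  · exact measurable_const
  · exact ENNReal.measurable_ofReal.comp
      ((Real.measurable_exp).comp (ENNReal.measurable_toReal.const_mul _))

lemma le_Dvar_iff (Bber : ℕ → Ω → Bool) (ω : Ω) (j : ℕ) :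
    (j : ℕ∞) + 1 ≤ Dvar Bber ω ↔ ∀ i ≤ j, Bber i ω = true := by
  simp only [Dvar, le_iInf_iff]
  constructor
  · intro h i hij
    by_contra hB
    have hB' : Bber i ω = false := by simpa using hB
    have := h i hB'
    have : ((j : ℕ∞) + 1 : ℕ∞) ≤ (i : ℕ∞) := this
    rw [show ((j : ℕ∞) + 1) = ((j + 1 : ℕ) : ℕ∞) by push_cast; ring, Nat.cast_le] at this
    omega
  · intro h i hB
    rw [show ((j : ℕ∞) + 1) = ((j + 1 : ℕ) : ℕ∞) by push_cast; ring, Nat.cast_le]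
    by_contra hc
    have : i ≤ j := by omega
    simp [h i this] at hB


lemma lintegral_prod_of_iIndepFun (P : Measure Ω) [IsProbabilityMeasure P]
    (g : ι → Ω → ℝ≥0∞) (hmeas : ∀ i, Measurable (g i))
    (hindep : iIndepFun g P) (s : Finset ι) :
    ∫⁻ ω, ∏ i ∈ s, g i ω ∂P = ∏ i ∈ s, ∫⁻ ω, g i ω ∂P := by
  classical
  induction s using Finset.cons_induction with
  | empty => simp
  | cons a s ha ih =>
    simp only [Finset.prod_cons]
    have hprod : (fun ω => ∏ i ∈ s, g i ω) = ∏ i ∈ s, g i := by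
      funext ω; simp [Finset.prod_apply]
    have hindep' : IndepFun (∏ j ∈ s, g j) (g a) P :=
      hindep.indepFun_finset_prod_of_notMem hmeas ha
    have hindep'' : IndepFun (fun ω => ∏ i ∈ s, g i ω) (g a) P := by
      rw [hprod]; exact hindep'
    have hmul := lintegral_mul_eq_lintegral_mul_lintegral_of_indepFun
      (s.measurable_prod fun i _ => hmeas i) (hmeas a) hindep''
    calc ∫⁻ ω, g a ω * ∏ i ∈ s, g i ω ∂P
        = ∫⁻ ω, (∏ i ∈ s, g i ω) * g a ω ∂P := by
          congr 1; funext ω; ring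
      _ = (∫⁻ ω, ∏ i ∈ s, g i ω ∂P) * ∫⁻ ω, g a ω ∂P := hmul
      _ = (∫⁻ ω, g a ω ∂P) * ∏ i ∈ s, ∫⁻ ω, g i ω ∂P := by
          rw [ih]; ring

noncomputable def phiFam (l : ℝ) : ∀ p : ℕ ⊕ ℕ, EBtype p → ℝ≥0∞
  | .inl _ => expNeg l
  | .inr _ => fun x : Bool => if x then 1 else 0

lemma measurable_phiFam (l : ℝ) : ∀ p, @Measurable _ _ (EBms p) _ (phiFam l p) := by
  rintro (i | i)
  · exact measurable_expNeg l
  · exact measurable_from_top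


lemma lap (P : Measure Ω) [IsProbabilityMeasure P] (r l : ℝ) (hr : 0 < r) (hl : 0 ≤ l)
    (X : Ω → ℝ≥0∞) (hX : Measurable X)
    (hdist : ∀ t : ℝ, 0 ≤ t →
      P {ω | ENNReal.ofReal t < X ω} = ENNReal.ofReal (Real.exp (-r * t))) :
    ∫⁻ ω, expNeg l (X ω) ∂P = ENNReal.ofReal (r / (r + l)) := by
  -- X is a.e. finite
  have hXtop : P {ω | X ω = ⊤} = 0 := by
    have hle : ∀ n : ℕ, P {ω | X ω = ⊤} ≤ ENNReal.ofReal (Real.exp (-r)) ^ n := by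
      intro n
      have hsub : {ω | X ω = ⊤} ⊆ {ω | ENNReal.ofReal n < X ω} := by
        intro ω h; simp only [mem_setOf_eq] at h ⊢; simp [h]
      calc P {ω | X ω = ⊤} ≤ P {ω | ENNReal.ofReal n < X ω} := measure_mono hsub
        _ = ENNReal.ofReal (Real.exp (-r * n)) := hdist n (Nat.cast_nonneg n)
        _ = ENNReal.ofReal (Real.exp (-r)) ^ n := by
            rw [show (-r * n : ℝ) = n * (-r) by ring, Real.exp_nat_mul,
              ENNReal.ofReal_pow (Real.exp_nonneg _)]
    have htend : Tendsto (fun n : ℕ => ENNReal.ofReal (Real.exp (-r)) ^ n) atTop (nhds 0) :=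
      ENNReal.tendsto_pow_atTop_nhds_zero_of_lt_one
        (by rw [ENNReal.ofReal_lt_one]; exact Real.exp_lt_one_iff.mpr (by linarith))
    exact le_antisymm (ge_of_tendsto htend (Eventually.of_forall hle)) zero_le
  have haefin : ∀ᵐ ω ∂P, X ω ≠ ⊤ := by
    rw [ae_iff]; simpa using hXtop
  have hcongr : ∫⁻ ω, expNeg l (X ω) ∂P
      = ∫⁻ ω, ENNReal.ofReal (Real.exp (-l * (X ω).toReal)) ∂P := by
    apply lintegral_congr_ae
    filter_upwards [haefin] with ω h
    simp [expNeg, h]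
  rw [hcongr]
  rcases eq_or_lt_of_le hl with hl0 | hl0
  · -- l = 0
    subst hl0
    simp only [neg_zero, zero_mul, Real.exp_zero, ENNReal.ofReal_one, lintegral_one,
      measure_univ]
    rw [add_zero, div_self hr.ne', ENNReal.ofReal_one]
  -- l > 0
  set p := r / l with hp
  have hppos : 0 < p := div_pos hr hl0
  have hXR : Measurable fun ω => (X ω).toReal := hX.ennreal_toReal
  have f_mble : Measurable fun ω => Real.exp (-l * (X ω).toReal) :=
    Real.measurable_exp.comp (hXR.const_mul (-l))
  rw [lintegral_eq_lintegral_meas_le P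
    (Eventually.of_forall fun ω => (Real.exp_pos _).le) f_mble.aemeasurable]
  have key : ∀ t ∈ Ioi (0:ℝ), P {a | t ≤ Real.exp (-l * (X a).toReal)}
      = if t ≤ 1 then 1 - ENNReal.ofReal (t ^ p) else 0 := by
    intro t ht
    rw [mem_Ioi] at ht
    by_cases h1 : t ≤ 1
    · rw [if_pos h1]
      set c := -Real.log t / l with hcdef
      have hc : 0 ≤ c := div_nonneg (neg_nonneg.mpr (Real.log_nonpos ht.le h1)) hl0.le
      have hset : {a | t ≤ Real.exp (-l * (X a).toReal)} = {a | (X a).toReal ≤ c} := by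
        ext a
        simp only [mem_setOf_eq]
        rw [← Real.log_le_iff_le_exp ht, hcdef, le_div_iff₀ hl0]
        constructor <;> intro h <;> nlinarith
      rw [hset]
      have hcompl : P {a | c < (X a).toReal} = ENNReal.ofReal (Real.exp (-r * c)) := by
        rw [← hdist c hc]
        apply measure_congr
        rw [MeasureTheory.ae_eq_set]
        constructor
        · apply measure_mono_null _ hXtop
          intro a ⟨h1', h2'⟩
          simp only [mem_setOf_eq] at h1' h2' ⊢
          by_contra htop
          exact h2' ((ENNReal.ofReal_lt_iff_lt_toReal hc htop).mpr h1')
        · apply measure_mono_null _ hXtop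
          intro a ⟨h1', h2'⟩
          simp only [mem_setOf_eq] at h1' h2' ⊢
          by_contra htop
          exact h2' ((ENNReal.ofReal_lt_iff_lt_toReal hc htop).mp h1')
      have hmeasset : MeasurableSet {a | c < (X a).toReal} :=
        measurableSet_lt measurable_const hXR
      have : {a | (X a).toReal ≤ c} = {a | c < (X a).toReal}ᶜ := by
        ext a; simp [not_lt]
      rw [this, prob_compl_eq_one_sub hmeasset, hcompl]
      congr 1
      rw [Real.rpow_def_of_pos ht, hcdef, hp]
      congr 1
      field_simp
    · rw [if_neg h1]
      push_neg at h1
      have hemp : {a | t ≤ Real.exp (-l * (X a).toReal)} = (∅ : Set Ω) := by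
        ext a
        simp only [mem_setOf_eq, mem_empty_iff_false, iff_false, not_le]
        have hexp : Real.exp (-l * (X a).toReal) ≤ 1 := by
          rw [Real.exp_le_one_iff]
          have := ENNReal.toReal_nonneg (a := X a)
          nlinarith
        linarith
      rw [hemp]
      exact measure_empty
  rw [setLIntegral_congr_fun measurableSet_Ioi key]
  rw [← Set.Ioc_union_Ioi_eq_Ioi (zero_le_one (α := ℝ)),
    lintegral_union measurableSet_Ioi (Set.Ioc_disjoint_Ioi le_rfl)]
  have h2 : ∫⁻ t in Ioi (1:ℝ), (if t ≤ 1 then 1 - ENNReal.ofReal (t ^ p) else 0) = 0 := by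
    rw [setLIntegral_congr_fun measurableSet_Ioi
      (fun t ht => if_neg (by rw [mem_Ioi] at ht; linarith))]
    simp
  have h1 : ∫⁻ t in Ioc (0:ℝ) 1, (if t ≤ 1 then 1 - ENNReal.ofReal (t ^ p) else 0)
      = 1 - ENNReal.ofReal (1 / (p + 1)) := by
    rw [setLIntegral_congr_fun measurableSet_Ioc
      (fun t ht => if_pos ht.2)]
    have hmg : Measurable fun t : ℝ => ENNReal.ofReal (t ^ p) :=
      ENNReal.measurable_ofReal.comp (Real.continuous_rpow_const hppos.le).measurable
    have hle : (fun t : ℝ => ENNReal.ofReal (t ^ p))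
        ≤ᵐ[volume.restrict (Ioc (0:ℝ) 1)] fun _ => (1 : ℝ≥0∞) := by
      filter_upwards [self_mem_ae_restrict measurableSet_Ioc] with t ht
      exact ENNReal.ofReal_le_one.mpr (Real.rpow_le_one ht.1.le ht.2 hppos.le)
    have hfin : ∫⁻ t in Ioc (0:ℝ) 1, ENNReal.ofReal (t ^ p) ≠ ⊤ := by
      have : ∫⁻ t in Ioc (0:ℝ) 1, ENNReal.ofReal (t ^ p)
          ≤ ∫⁻ _ in Ioc (0:ℝ) 1, (1 : ℝ≥0∞) := lintegral_mono_ae hle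
      apply ne_top_of_le_ne_top _ this
      simp [Real.volume_Ioc]
    have hsub := lintegral_sub hmg hfin hle
    rw [hsub]
    have hvol : ∫⁻ _ in Ioc (0:ℝ) 1, (1 : ℝ≥0∞) = 1 := by
      simp [Real.volume_Ioc]
    rw [hvol]
    congr 1
    have hii : IntervalIntegrable (fun t : ℝ => t ^ p) volume 0 1 :=
      intervalIntegral.intervalIntegrable_rpow (Or.inl hppos.le)
    have hint : IntegrableOn (fun t : ℝ => t ^ p) (Ioc (0:ℝ) 1) volume := hii.1
    rw [← ofReal_integral_eq_lintegral_ofReal hint (by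
      filter_upwards [self_mem_ae_restrict measurableSet_Ioc] with t ht
      exact Real.rpow_nonneg ht.1.le _)]
    congr 1
    rw [← intervalIntegral.integral_of_le zero_le_one,
      integral_rpow (Or.inl (by linarith : (-1:ℝ) < p))]
    rw [Real.one_rpow, Real.zero_rpow (by linarith : p + 1 ≠ 0)]
    ring
  rw [h1, h2, add_zero]
  rw [show (1:ℝ≥0∞) = ENNReal.ofReal 1 from ENNReal.ofReal_one.symm,
    ← ENNReal.ofReal_sub _ (by positivity)]
  congr 1
  rw [hp]
  field_simp
  ring



/-- Proposition: explicit Laplace transform.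
For every `λ ≥ 0`,
`E[Σ_{j=1}^{D} e^{-λ S_j}] = Σ_{k=1}^∞ Π_{i=0}^{k-1} b(i)/(b(i)+d(i)+λ)`
as an identity in `[0,∞]` (here the sum over `j` ranges over all `j ∈ ℕ` with `j ≤ D`;
below `j : ℕ` encodes the index `j+1`, and `k : ℕ` encodes the index `k+1`). -/
theorem laplace_transform_formula
    (P : Measure Ω) [IsProbabilityMeasure P] (b d : ℕ → ℝ)
    (E : ℕ → Ω → ℝ≥0∞) (Bber : ℕ → Ω → Bool)
    (hdata : IsPAVDData P b d E Bber) :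
    ∀ l : ℝ, 0 ≤ l →
      ∫⁻ ω, (∑' j : ℕ,
          if (j : ℕ∞) + 1 ≤ Dvar Bber ω then expNeg l (Spart E (j + 1) ω) else 0) ∂P
        = ∑' k : ℕ, ∏ i ∈ Finset.range (k + 1),
            ENNReal.ofReal (b i / (b i + d i + l)) := by
  intro l hl
  classical
  set g : ℕ ⊕ ℕ → Ω → ℝ≥0∞ := fun p => phiFam l p ∘ EBfam E Bber p with hgdef
  have hgmeas : ∀ p, Measurable (g p) := by
    rintro (i | i)
    · exact (measurable_phiFam l _).comp (hdata.Emeas i :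
        @Measurable Ω (EBtype (Sum.inl i)) _ (EBms (Sum.inl i)) (EBfam E Bber (Sum.inl i)))
    · exact (measurable_phiFam l _).comp (hdata.Bmeas i :
        @Measurable Ω (EBtype (Sum.inr i)) _ (EBms (Sum.inr i)) (EBfam E Bber (Sum.inr i)))
  have hgindep : iIndepFun g P :=
    hdata.indep.comp (phiFam l) (measurable_phiFam l)
  have hginl : ∀ i ω, g (.inl i) ω = expNeg l (E i ω) := by
    intro i ω; rw [hgdef]; rfl
  have hginr : ∀ i ω, g (.inr i) ω = if Bber i ω = true then 1 else 0 := by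
    intro i ω; rw [hgdef]
    show phiFam l (Sum.inr i) (Bber i ω) = _
    by_cases h : Bber i ω = true <;> simp [phiFam, h]
  -- index sets
  set S : ℕ → Finset (ℕ ⊕ ℕ) := fun j =>
    ((Finset.range (j + 1)).image Sum.inl) ∪ ((Finset.range (j + 1)).image Sum.inr)
    with hSdef
  have hdisj : ∀ j, Disjoint ((Finset.range (j + 1)).image (Sum.inl : ℕ → ℕ ⊕ ℕ))
      ((Finset.range (j + 1)).image Sum.inr) := by
    intro j
    simp only [Finset.disjoint_left, Finset.mem_image]
    rintro p ⟨a, _, rfl⟩ ⟨c, _, h⟩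
    exact absurd h (by simp)
  -- pointwise identity
  have hpt : ∀ (j : ℕ) (ω : Ω),
      (if (j : ℕ∞) + 1 ≤ Dvar Bber ω then expNeg l (Spart E (j + 1) ω) else 0)
        = ∏ p ∈ S j, g p ω := by
    intro j ω
    have hprod : ∏ p ∈ S j, g p ω
        = ∏ i ∈ Finset.range (j + 1), (g (.inl i) ω * g (.inr i) ω) := by
      rw [hSdef]
      rw [Finset.prod_union (hdisj j), Finset.prod_image (fun a _ b _ h => by
          simpa using h), Finset.prod_image (fun a _ b _ h => by simpa using h),
        ← Finset.prod_mul_distrib]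
    rw [hprod]
    by_cases hD : ∀ i ≤ j, Bber i ω = true
    · rw [if_pos ((le_Dvar_iff Bber ω j).mpr hD)]
      have h1 : ∀ i ∈ Finset.range (j + 1), g (.inl i) ω * g (.inr i) ω
          = expNeg l (E i ω) := by
        intro i hi
        rw [hginl, hginr, if_pos (hD i (by simpa [Nat.lt_succ_iff] using hi)), mul_one]
      rw [Finset.prod_congr rfl h1, Spart, expNeg_sum]
    · rw [if_neg (fun h => hD ((le_Dvar_iff Bber ω j).mp h))]
      push_neg at hD
      obtain ⟨i0, hi0, hB⟩ := hD
      refine (Finset.prod_eq_zero (Finset.mem_range.mpr (Nat.lt_succ_of_le hi0)) ?_).symm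
      rw [hginl, hginr, if_neg hB, mul_zero]
  -- single integrals
  have hintE : ∀ i, ∫⁻ ω, g (.inl i) ω ∂P
      = ENNReal.ofReal ((b i + d i) / (b i + d i + l)) := by
    intro i
    exact lap P (b i + d i) l (by have := hdata.hb i; have := hdata.hd i; linarith) hl
      (E i) (hdata.Emeas i) (fun t ht => hdata.Edist i t ht)
  have hintB : ∀ i, ∫⁻ ω, g (.inr i) ω ∂P = ENNReal.ofReal (b i / (b i + d i)) := by
    intro i
    have hs : MeasurableSet {ω | Bber i ω = true} :=
      hdata.Bmeas i (measurableSet_singleton true)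
    have hind : (fun ω => g (.inr i) ω)
        = Set.indicator {ω | Bber i ω = true} (fun _ => (1 : ℝ≥0∞)) := by
      funext ω
      by_cases h : Bber i ω = true <;> simp [hginr, Set.indicator, h]
    rw [hind, lintegral_indicator hs, setLIntegral_one, hdata.Bdist i]
  -- integral of each term
  have hterm : ∀ j : ℕ, ∫⁻ ω, ∏ p ∈ S j, g p ω ∂P
      = ∏ i ∈ Finset.range (j + 1), ENNReal.ofReal (b i / (b i + d i + l)) := by
    intro j
    rw [lintegral_prod_of_iIndepFun P g hgmeas hgindep (S j)]
    rw [hSdef]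
    rw [Finset.prod_union (hdisj j), Finset.prod_image (fun a _ b _ h => by simpa using h),
      Finset.prod_image (fun a _ b _ h => by simpa using h), ← Finset.prod_mul_distrib]
    apply Finset.prod_congr rfl
    intro i _
    have hbd : 0 < b i + d i := by have := hdata.hb i; have := hdata.hd i; linarith
    have hbdl : 0 < b i + d i + l := by linarith
    rw [hintE, hintB, ← ENNReal.ofReal_mul (div_nonneg hbd.le hbdl.le)]
    congr 1
    field_simp
  -- assemble
  calc ∫⁻ ω, (∑' j : ℕ,
          if (j : ℕ∞) + 1 ≤ Dvar Bber ω then expNeg l (Spart E (j + 1) ω) else 0) ∂P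
      = ∫⁻ ω, ∑' j : ℕ, ∏ p ∈ S j, g p ω ∂P := by
        apply lintegral_congr
        intro ω
        exact tsum_congr fun j => hpt j ω
    _ = ∑' j : ℕ, ∫⁻ ω, ∏ p ∈ S j, g p ω ∂P :=
        lintegral_tsum fun j => (Finset.measurable_prod _ fun p _ => hgmeas p).aemeasurable
    _ = ∑' k : ℕ, ∏ i ∈ Finset.range (k + 1),
          ENNReal.ofReal (b i / (b i + d i + l)) := tsum_congr hterm


end PAVD
end

section
/- Assume ρ1(k) → ∞ as k → ∞. (i) If moreover ρ2(k) → ∞ and d(i)/b(i) → 0 as i → ∞, then (−log P(D ≥ k) − ρ1(k)) / ρ2(k) → 1/2 as k → ∞. (ii) If instead ρ2(k) converges to a finite limit as k → ∞, then sup_{k∈ℕ} |log P(D ≥ k) + ρ1(k)| < ∞. -/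
open MeasureTheory ProbabilityTheory ENNReal NNReal Filter Set

namespace PAVD

variable {Ω : Type*} [MeasurableSpace Ω]

/-- `ρ₁(k) = Σ_{i=0}^{k-1} d(i)/(b(i)+d(i))`. -/
noncomputable def rho1 (b d : ℕ → ℝ) (k : ℕ) : ℝ :=
  ∑ i ∈ Finset.range k, d i / (b i + d i)

/-- `ρ₂(k) = Σ_{i=0}^{k-1} (d(i)/(b(i)+d(i)))²`. -/
noncomputable def rho2 (b d : ℕ → ℝ) (k : ℕ) : ℝ :=
  ∑ i ∈ Finset.range k, (d i / (b i + d i)) ^ 2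

/-! ### Auxiliary analytic lemmas -/

lemma g_nonneg {p : ℝ} (h1 : p < 1) : 0 ≤ -Real.log (1 - p) - p := by
  have h := Real.log_le_sub_one_of_pos (x := 1 - p) (by linarith)
  linarith

lemma g_key {p : ℝ} (h0 : 0 ≤ p) (h1 : p < 1) :
    |(-Real.log (1 - p) - p) - p ^ 2 / 2| ≤ p ^ 3 / (1 - p) := by
  have habs : |p| = p := abs_of_nonneg h0
  have h := Real.abs_log_sub_add_sum_range_le (x := p) (by rw [habs]; exact h1) 2
  rw [habs] at h
  have hsum : ∑ i ∈ Finset.range 2, p ^ (i + 1) / ((i : ℝ) + 1) = p + p ^ 2 / 2 := by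
    norm_num [Finset.sum_range_succ]
  rw [hsum] at h
  have heq : (-Real.log (1 - p) - p) - p ^ 2 / 2
      = -((p + p ^ 2 / 2) + Real.log (1 - p)) := by ring
  rw [heq, abs_neg]
  convert h using 2

/-- Part (i), for an abstract sequence `p`. -/
lemma partI (p : ℕ → ℝ) (h0 : ∀ i, 0 ≤ p i) (h1 : ∀ i, p i < 1)
    (hp0 : Tendsto p atTop (nhds 0))
    (hr2 : Tendsto (fun k => ∑ i ∈ Finset.range k, p i ^ 2) atTop atTop) :
    Tendsto (fun k => (∑ i ∈ Finset.range k, (-Real.log (1 - p i) - p i)) /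
        (∑ i ∈ Finset.range k, p i ^ 2)) atTop (nhds (1 / 2)) := by
  rw [Metric.tendsto_atTop]
  intro ε hε
  have hq : Tendsto (fun i => p i / (1 - p i)) atTop (nhds 0) := by
    have h1p : Tendsto (fun i => 1 - p i) atTop (nhds 1) := by
      simpa using tendsto_const_nhds.sub hp0
    have h := hp0.div h1p one_ne_zero
    rw [zero_div] at h
    exact h
  obtain ⟨N1, hN1⟩ := (Metric.tendsto_atTop.mp hq (ε / 4) (by linarith))
  set C : ℝ := ∑ i ∈ Finset.range N1, p i ^ 3 / (1 - p i) with hC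
  have hCnn : 0 ≤ C := Finset.sum_nonneg fun i _ =>
    div_nonneg (pow_nonneg (h0 i) 3) (by linarith [h1 i])
  obtain ⟨N2, hN2⟩ := (tendsto_atTop.mp hr2 (max (4 * C / ε + 1) 1)).exists_forall_of_atTop
  refine ⟨max N1 N2, fun k hk => ?_⟩
  have hkN1 : N1 ≤ k := le_trans (le_max_left _ _) hk
  have hkN2 : N2 ≤ k := le_trans (le_max_right _ _) hk
  set R : ℝ := ∑ i ∈ Finset.range k, p i ^ 2 with hR
  have hRbig : max (4 * C / ε + 1) 1 ≤ R := hN2 k hkN2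
  have hRpos : (0 : ℝ) < R := lt_of_lt_of_le (by norm_num) (le_trans (le_max_right _ _) hRbig)
  set S : ℝ := ∑ i ∈ Finset.range k, (-Real.log (1 - p i) - p i) with hS
  -- bound |S - R/2|
  have hsplit : |S - R / 2| ≤ C + ε / 4 * R := by
    have hSR : S - R / 2 = ∑ i ∈ Finset.range k,
        ((-Real.log (1 - p i) - p i) - p i ^ 2 / 2) := by
      rw [hS, hR, Finset.sum_div, ← Finset.sum_sub_distrib]
    rw [hSR]
    calc |∑ i ∈ Finset.range k, ((-Real.log (1 - p i) - p i) - p i ^ 2 / 2)|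
        ≤ ∑ i ∈ Finset.range k, |(-Real.log (1 - p i) - p i) - p i ^ 2 / 2| :=
          Finset.abs_sum_le_sum_abs _ _
      _ ≤ ∑ i ∈ Finset.range k, (if i < N1 then p i ^ 3 / (1 - p i) else ε / 4 * p i ^ 2) := by
          refine Finset.sum_le_sum fun i _ => ?_
          by_cases hi : i < N1
          · simpa [hi] using g_key (h0 i) (h1 i)
          · simp only [hi, if_false]
            have hgi := g_key (h0 i) (h1 i)
            have hqi : p i / (1 - p i) ≤ ε / 4 := by
              have := hN1 i (le_of_not_gt hi)
              rw [Real.dist_eq, sub_zero] at this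
              calc p i / (1 - p i) ≤ |p i / (1 - p i)| := le_abs_self _
                _ ≤ ε / 4 := le_of_lt this
            have heq : p i ^ 3 / (1 - p i) = p i / (1 - p i) * p i ^ 2 := by
              field_simp
            calc |(-Real.log (1 - p i) - p i) - p i ^ 2 / 2| ≤ p i ^ 3 / (1 - p i) := hgi
              _ = p i / (1 - p i) * p i ^ 2 := heq
              _ ≤ ε / 4 * p i ^ 2 := by
                  apply mul_le_mul_of_nonneg_right hqi (by positivity)
      _ ≤ C + ε / 4 * R := by
          rw [hC, hR, Finset.mul_sum, Finset.sum_ite]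
          have hA : ∑ i ∈ Finset.filter (fun x => x < N1) (Finset.range k), p i ^ 3 / (1 - p i)
              ≤ ∑ i ∈ Finset.range N1, p i ^ 3 / (1 - p i) := by
            refine Finset.sum_le_sum_of_subset_of_nonneg ?_ ?_
            · intro i hi
              simp only [Finset.mem_filter, Finset.mem_range] at hi ⊢
              exact hi.2
            · intro i _ _
              exact div_nonneg (pow_nonneg (h0 i) 3) (by linarith [h1 i])
          have hB : ∑ i ∈ Finset.filter (fun x => ¬ x < N1) (Finset.range k), (ε / 4 * p i ^ 2)
              ≤ ∑ i ∈ Finset.range k, (ε / 4 * p i ^ 2) := by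
            refine Finset.sum_le_sum_of_subset_of_nonneg (Finset.filter_subset _ _) ?_
            intro i _ _
            exact mul_nonneg (by linarith) (sq_nonneg _)
          exact add_le_add hA hB
  have hCR : C / R < ε / 4 := by
    have h4 : 4 * C / ε + 1 ≤ R := le_trans (le_max_left _ _) hRbig
    rw [div_lt_iff₀ hRpos]
    have : 4 * C / ε < R := by linarith
    rw [div_lt_iff₀ hε] at this
    linarith [mul_comm ε R]
  have hdist : dist (S / R) (1 / 2) = |S - R / 2| / R := by
    rw [Real.dist_eq]
    have h2 : S / R - 1 / 2 = (S - R / 2) / R := by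
      field_simp
    rw [h2, abs_div, abs_of_pos hRpos]
  rw [hdist]
  calc |S - R / 2| / R ≤ (C + ε / 4 * R) / R := by gcongr
    _ = C / R + ε / 4 := by
        rw [add_div, mul_div_assoc, div_self hRpos.ne', mul_one]
    _ < ε / 4 + ε / 4 := by linarith
    _ ≤ ε := by linarith

/-- Part (ii), for an abstract sequence `p`. -/
lemma partII (p : ℕ → ℝ) (h0 : ∀ i, 0 ≤ p i) (h1 : ∀ i, p i < 1) (c : ℝ)
    (hr2 : Tendsto (fun k => ∑ i ∈ Finset.range k, p i ^ 2) atTop (nhds c)) :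
    ∃ C : ℝ, ∀ k : ℕ, ∑ i ∈ Finset.range k, (-Real.log (1 - p i) - p i) ≤ C := by
  have hmono : Monotone (fun k => ∑ i ∈ Finset.range k, p i ^ 2) := by
    intro m n hmn
    exact Finset.sum_le_sum_of_subset_of_nonneg (Finset.range_subset_range.mpr hmn)
      (fun i _ _ => by positivity)
  have hle : ∀ k, ∑ i ∈ Finset.range k, p i ^ 2 ≤ c := hmono.ge_of_tendsto hr2
  -- p → 0
  have hsq : Tendsto (fun i => p i ^ 2) atTop (nhds 0) := by
    have h := (hr2.comp (tendsto_add_atTop_nat 1)).sub hr2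
    rw [sub_self] at h
    refine h.congr fun i => ?_
    simp [Function.comp, Finset.sum_range_succ]
  have hp0 : Tendsto p atTop (nhds 0) := by
    have h := (Real.continuous_sqrt.tendsto 0).comp hsq
    rw [Real.sqrt_zero] at h
    refine h.congr fun i => ?_
    simp [Function.comp, Real.sqrt_sq (h0 i)]
  obtain ⟨N, hN⟩ := (Metric.tendsto_atTop.mp hp0 (1 / 2) (by norm_num))
  have hhalf : ∀ i, N ≤ i → p i ≤ 1 / 2 := by
    intro i hi
    have := hN i hi
    rw [Real.dist_eq, sub_zero] at this
    calc p i ≤ |p i| := le_abs_self _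
      _ ≤ 1 / 2 := le_of_lt this
  have hg32 : ∀ i, N ≤ i → -Real.log (1 - p i) - p i ≤ 3 / 2 * p i ^ 2 := by
    intro i hi
    have hgi := g_key (h0 i) (h1 i)
    have h2 : 1 - p i ≥ 1 / 2 := by linarith [hhalf i hi]
    have h3 : p i ^ 3 / (1 - p i) ≤ p i ^ 2 := by
      rw [div_le_iff₀ (by linarith)]
      nlinarith [h0 i, hhalf i hi, sq_nonneg (p i)]
    have := abs_le.mp hgi
    linarith [this.2]
  refine ⟨(∑ i ∈ Finset.range N, (-Real.log (1 - p i) - p i)) + 3 / 2 * (c - ∑ i ∈ Finset.range N, p i ^ 2), fun k => ?_⟩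
  set m := max k N with hm
  have hNm : N ≤ m := le_max_right _ _
  have hkm : ∑ i ∈ Finset.range k, (-Real.log (1 - p i) - p i)
      ≤ ∑ i ∈ Finset.range m, (-Real.log (1 - p i) - p i) :=
    Finset.sum_le_sum_of_subset_of_nonneg (Finset.range_subset_range.mpr (le_max_left _ _))
      (fun i _ _ => g_nonneg (h1 i))
  have hsplitS : ∑ i ∈ Finset.range m, (-Real.log (1 - p i) - p i)
      = (∑ i ∈ Finset.range N, (-Real.log (1 - p i) - p i))
        + ∑ i ∈ Finset.Ico N m, (-Real.log (1 - p i) - p i) := by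
    rw [Finset.range_eq_Ico, ← Finset.sum_Ico_consecutive _ (Nat.zero_le N) hNm,
      ← Finset.range_eq_Ico]
  have hsplitR : ∑ i ∈ Finset.range m, p i ^ 2
      = (∑ i ∈ Finset.range N, p i ^ 2) + ∑ i ∈ Finset.Ico N m, p i ^ 2 := by
    rw [Finset.range_eq_Ico, ← Finset.sum_Ico_consecutive _ (Nat.zero_le N) hNm,
      ← Finset.range_eq_Ico]
  have htail : ∑ i ∈ Finset.Ico N m, (-Real.log (1 - p i) - p i)
      ≤ 3 / 2 * ∑ i ∈ Finset.Ico N m, p i ^ 2 := by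
    rw [Finset.mul_sum]
    refine Finset.sum_le_sum fun i hi => hg32 i (Finset.mem_Ico.mp hi).1
  have hRm : ∑ i ∈ Finset.Ico N m, p i ^ 2 ≤ c - ∑ i ∈ Finset.range N, p i ^ 2 := by
    have := hle m
    rw [hsplitR] at this
    linarith
  calc ∑ i ∈ Finset.range k, (-Real.log (1 - p i) - p i)
      ≤ ∑ i ∈ Finset.range m, (-Real.log (1 - p i) - p i) := hkm
    _ = (∑ i ∈ Finset.range N, (-Real.log (1 - p i) - p i))
        + ∑ i ∈ Finset.Ico N m, (-Real.log (1 - p i) - p i) := hsplitS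
    _ ≤ (∑ i ∈ Finset.range N, (-Real.log (1 - p i) - p i))
        + 3 / 2 * (c - ∑ i ∈ Finset.range N, p i ^ 2) := by
          have := le_trans htail (by linarith [hRm] :
            3 / 2 * ∑ i ∈ Finset.Ico N m, p i ^ 2
              ≤ 3 / 2 * (c - ∑ i ∈ Finset.range N, p i ^ 2))
          linarith

/-- The tail probability is a product. -/
lemma prob_tail (P : Measure Ω) (b d : ℕ → ℝ)
    (hb : ∀ i, 0 < b i) (hd : ∀ i, 0 ≤ d i)
    (Bber : ℕ → Ω → Bool)
    (hindep : iIndepFun Bber P)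
    (hBdist : ∀ i : ℕ, P {ω | Bber i ω = true} = ENNReal.ofReal (b i / (b i + d i)))
    (k : ℕ) :
    (P {ω | (k : ℕ∞) ≤ Dvar Bber ω}).toReal
      = ∏ i ∈ Finset.range k, (1 - d i / (b i + d i)) := by
  have hset : {ω | (k : ℕ∞) ≤ Dvar Bber ω} = ⋂ i ∈ Finset.range k, Bber i ⁻¹' {true} := by
    ext ω
    simp only [mem_setOf_eq, Dvar, le_iInf_iff, mem_iInter, Finset.mem_range, mem_preimage,
      mem_singleton_iff]
    constructor
    · intro h i hik
      by_contra hfalse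
      have hbf : Bber i ω = false := by
        cases hB : Bber i ω
        · rfl
        · exact absurd hB hfalse
      have h2 : (k : ℕ∞) ≤ (i : ℕ∞) := h i hbf
      have : k ≤ i := by exact_mod_cast h2
      omega
    · intro h i hbi
      by_contra hlt
      push_neg at hlt
      have hik : i < k := by exact_mod_cast hlt
      rw [h i hik] at hbi
      simp at hbi
  rw [hset, hindep.meas_biInter (fun i _ => ⟨{true}, trivial, rfl⟩), ENNReal.toReal_prod]
  refine Finset.prod_congr rfl fun i _ => ?_
  have hpre : Bber i ⁻¹' {true} = {ω | Bber i ω = true} := rfl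
  have hbd : 0 < b i + d i := by linarith [hb i, hd i]
  rw [hpre, hBdist i, ENNReal.toReal_ofReal (div_nonneg (hb i).le hbd.le)]
  field_simp
  ring

/-- Lemma: sharp asymptotics of the offspring tail.
Assume `ρ₁(k) → ∞`.
(i) If `ρ₂(k) → ∞` and `d(i)/b(i) → 0`, then `(-log P(D ≥ k) - ρ₁(k))/ρ₂(k) → 1/2`.
(ii) If instead `ρ₂(k)` converges to a finite limit, then
`sup_k |log P(D ≥ k) + ρ₁(k)| < ∞`. -/
theorem offspring_tail_asymptotics
    (P : Measure Ω) [IsProbabilityMeasure P] (b d : ℕ → ℝ)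
    (hb : ∀ i, 0 < b i) (hd : ∀ i, 0 ≤ d i)
    (Bber : ℕ → Ω → Bool) (hBmeas : ∀ i, Measurable (Bber i))
    (hindep : iIndepFun Bber P)
    (hBdist : ∀ i : ℕ, P {ω | Bber i ω = true} = ENNReal.ofReal (b i / (b i + d i)))
    (hrho1 : Tendsto (fun k : ℕ => rho1 b d k) atTop atTop) :
    ((Tendsto (fun k : ℕ => rho2 b d k) atTop atTop) →
      (Tendsto (fun i : ℕ => d i / b i) atTop (nhds 0)) →
      Tendsto (fun k : ℕ =>
          (-Real.log (P {ω | (k : ℕ∞) ≤ Dvar Bber ω}).toReal - rho1 b d k) / rho2 b d k)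
        atTop (nhds (1 / 2))) ∧
    ((∃ c : ℝ, Tendsto (fun k : ℕ => rho2 b d k) atTop (nhds c)) →
      ∃ C : ℝ, ∀ k : ℕ,
        |Real.log (P {ω | (k : ℕ∞) ≤ Dvar Bber ω}).toReal + rho1 b d k| ≤ C) := by
  set p : ℕ → ℝ := fun i => d i / (b i + d i) with hp
  have hbd : ∀ i, 0 < b i + d i := fun i => by linarith [hb i, hd i]
  have h0 : ∀ i, 0 ≤ p i := fun i => div_nonneg (hd i) (hbd i).le
  have h1 : ∀ i, p i < 1 := fun i => by
    rw [hp, div_lt_one (hbd i)]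
    linarith [hb i]
  have hlog : ∀ k : ℕ, Real.log (P {ω | (k : ℕ∞) ≤ Dvar Bber ω}).toReal
      = ∑ i ∈ Finset.range k, Real.log (1 - p i) := by
    intro k
    rw [prob_tail P b d hb hd Bber hindep hBdist k]
    exact Real.log_prod fun i _ => ne_of_gt (by linarith [h1 i])
  have hkey : ∀ k : ℕ, -Real.log (P {ω | (k : ℕ∞) ≤ Dvar Bber ω}).toReal - rho1 b d k
      = ∑ i ∈ Finset.range k, (-Real.log (1 - p i) - p i) := by
    intro k
    rw [hlog k, rho1, Finset.sum_sub_distrib]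
    rw [← Finset.sum_neg_distrib]
  have hrho2eq : ∀ k : ℕ, rho2 b d k = ∑ i ∈ Finset.range k, p i ^ 2 := fun k => rfl
  constructor
  · intro hr2 hdb
    have hp0 : Tendsto p atTop (nhds 0) := by
      refine squeeze_zero h0 (fun i => ?_) hdb
      exact div_le_div_of_nonneg_left (hd i) (hb i) (by linarith [hd i])
    have := partI p h0 h1 hp0 (by simpa only [hrho2eq] using hr2)
    refine this.congr fun k => ?_
    rw [hkey k, hrho2eq k]
  · rintro ⟨c, hc⟩
    obtain ⟨C, hC⟩ := partII p h0 h1 c (by simpa only [hrho2eq] using hc)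
    refine ⟨C, fun k => ?_⟩
    have hSnn : 0 ≤ ∑ i ∈ Finset.range k, (-Real.log (1 - p i) - p i) :=
      Finset.sum_nonneg fun i _ => g_nonneg (h1 i)
    have heq : Real.log (P {ω | (k : ℕ∞) ≤ Dvar Bber ω}).toReal + rho1 b d k
        = -(∑ i ∈ Finset.range k, (-Real.log (1 - p i) - p i)) := by
      have := hkey k
      linarith
    rw [heq, abs_neg, abs_of_nonneg hSnn]
    exact hC k

end PAVD
end
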